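/- Let A be a Heyting algebra with □ : A → A satisfying □(a ⊓ b) = □a ⊓ □b and □⊤ = ⊤, and ♦ : A → A satisfying ♦(a ⊔ b) = ♦a ⊔ ♦b and ♦⊥ = ⊥, such that (♦a ⇨ □b) ≤ □(a ⇨ b) for all a, b ∈ A, where ⇨ is the Heyting implication. Let U, V be prime filters of A such that □a ∈ U implies a ∈ V for all a. Then there exists a prime filter W with U ⊆ W such that □a ∈ W implies a ∈ V for all a, and ♦a ∈ W for all a ∈ V. -/

import Mathlib

/-!
Let `F` be the filter generated by `U` and `♦[V]`, and `I` the ideal generated by `□[Vᶜ]`.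
They are disjoint: if `u ⊓ ♦a ≤ □b` with `u ∈ U`, `a ∈ V`, then `u ≤ ♦a ⇨ □b ≤ □(a ⇨ b)`,
so `a ⇨ b ∈ V` and hence `b ∈ V`. The prime filter theorem then gives a prime filter
`W ⊇ F` missing `I`; missing `I` means exactly that `□b ∈ W` forces `b ∈ V`.
-/

/-- A prime filter of a bounded distributive lattice (in particular of a Heyting algebra). -/
def IsPrimeFilter {A : Type*} [DistribLattice A] [BoundedOrder A] (F : Set A) : Prop :=
  (∀ a b : A, a ∈ F → a ≤ b → b ∈ F) ∧
  (∀ a b : A, a ∈ F → b ∈ F → a ⊓ b ∈ F) ∧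
  (⊤ : A) ∈ F ∧ (⊥ : A) ∉ F ∧
  (∀ a b : A, a ⊔ b ∈ F → a ∈ F ∨ b ∈ F)

section PrimeFilter

variable {A : Type*} [DistribLattice A] [BoundedOrder A]

namespace IsPrimeFilter

variable {F : Set A} {a b : A}

theorem mem_of_le (hF : IsPrimeFilter F) (ha : a ∈ F) (hab : a ≤ b) : b ∈ F := hF.1 a b ha hab

theorem inf_mem (hF : IsPrimeFilter F) (ha : a ∈ F) (hb : b ∈ F) : a ⊓ b ∈ F := hF.2.1 a b ha hb

theorem top_mem (hF : IsPrimeFilter F) : ⊤ ∈ F := hF.2.2.1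

theorem bot_notMem (hF : IsPrimeFilter F) : ⊥ ∉ F := hF.2.2.2.1

theorem mem_or_mem (hF : IsPrimeFilter F) (hab : a ⊔ b ∈ F) : a ∈ F ∨ b ∈ F := hF.2.2.2.2 a b hab

end IsPrimeFilter

theorem Order.Ideal.IsPrime.isPrimeFilter_compl {J : Order.Ideal A} (hJ : J.IsPrime) :
    IsPrimeFilter (J : Set A)ᶜ := by
  refine ⟨fun a b ha hab hb => ha (J.lower hab hb), fun a b ha hb hab => ?_,
    hJ.top_notMem, not_not_intro J.bot_mem, fun a b hab => ?_⟩
  · rcases hJ.mem_or_mem hab with h | h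
    exacts [ha h, hb h]
  · by_contra! h
    exact hab (J.sup_mem (not_not.1 h.1) (not_not.1 h.2))

theorem exists_isPrimeFilter_of_disjoint {F : Order.PFilter A} {I : Order.Ideal A}
    (hFI : Disjoint (F : Set A) I) :
    ∃ W : Set A, IsPrimeFilter W ∧ (F : Set A) ⊆ W ∧ Disjoint W I := by
  obtain ⟨J, hJ, hIJ, hFJ⟩ := DistribLattice.prime_ideal_of_disjoint_filter_ideal hFI
  exact ⟨(J : Set A)ᶜ, hJ.isPrimeFilter_compl, hFJ.subset_compl_right,
    disjoint_compl_left.mono_right hIJ⟩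

end PrimeFilter

section Modal

variable {A : Type*} [HeytingAlgebra A] {box dia : A → A} {U V : Set A}

def modalFilter (dia : A → A) (U V : Set A) : Set A :=
  {x | ∃ u ∈ U, ∃ a ∈ V, u ⊓ dia a ≤ x}

theorem subset_modalFilter (hV : IsPrimeFilter V) : U ⊆ modalFilter dia U V :=
  fun u hu => ⟨u, hu, ⊤, hV.top_mem, inf_le_left⟩

theorem dia_mem_modalFilter (hU : IsPrimeFilter U) {a : A} (ha : a ∈ V) :
    dia a ∈ modalFilter dia U V :=
  ⟨⊤, hU.top_mem, a, ha, inf_le_right⟩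

theorem isPFilter_modalFilter (hdia : Monotone dia) (hU : IsPrimeFilter U)
    (hV : IsPrimeFilter V) : Order.IsPFilter (modalFilter dia U V) := by
  refine Order.IsPFilter.of_def ⟨⊤, subset_modalFilter hV hU.top_mem⟩ ?_ ?_
  · rintro x ⟨u₁, hu₁, a₁, ha₁, h₁⟩ y ⟨u₂, hu₂, a₂, ha₂, h₂⟩
    refine ⟨x ⊓ y, ⟨u₁ ⊓ u₂, hU.inf_mem hu₁ hu₂, a₁ ⊓ a₂, hV.inf_mem ha₁ ha₂, ?_⟩,
      inf_le_left, inf_le_right⟩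
    exact le_inf (le_trans (inf_le_inf inf_le_left (hdia inf_le_left)) h₁)
      (le_trans (inf_le_inf inf_le_right (hdia inf_le_right)) h₂)
  · rintro x y hxy ⟨u, hu, a, ha, hle⟩
    exact ⟨u, hu, a, ha, hle.trans hxy⟩

def modalIdeal (hbox : Monotone box) (hV : IsPrimeFilter V) : Order.Ideal A where
  carrier := {x | ∃ b ∉ V, x ≤ box b}
  lower' := by
    rintro x y hxy ⟨b, hb, hle⟩
    exact ⟨b, hb, hxy.trans hle⟩
  nonempty' := ⟨box ⊥, ⊥, hV.bot_notMem, le_rfl⟩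
  directed' := by
    rintro x ⟨b₁, hb₁, h₁⟩ y ⟨b₂, hb₂, h₂⟩
    refine ⟨x ⊔ y, ⟨b₁ ⊔ b₂, fun h => ?_,
      sup_le (h₁.trans (hbox le_sup_left)) (h₂.trans (hbox le_sup_right))⟩,
      le_sup_left, le_sup_right⟩
    rcases hV.mem_or_mem h with h | h
    exacts [hb₁ h, hb₂ h]

theorem disjoint_modalFilter_modalIdeal (hbox : Monotone box)
    (hax : ∀ a b : A, (dia a ⇨ box b) ≤ box (a ⇨ b))
    (hU : IsPrimeFilter U) (hV : IsPrimeFilter V) (hUV : ∀ a : A, box a ∈ U → a ∈ V) :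
    Disjoint (modalFilter dia U V) (modalIdeal hbox hV : Set A) := by
  rw [Set.disjoint_left]
  rintro x ⟨u, hu, a, ha, hux⟩ ⟨b, hb, hxb⟩
  have hu_le : u ≤ box (a ⇨ b) := (le_himp_iff.2 (hux.trans hxb)).trans (hax a b)
  have himp : a ⇨ b ∈ V := hUV _ (hU.mem_of_le hu hu_le)
  exact hb (hV.mem_of_le (hV.inf_mem ha himp) inf_himp_le)

end Modal

theorem stmt18_general {A : Type*} [HeytingAlgebra A]
    (box dia : A → A)
    (hb1 : ∀ a b : A, box (a ⊓ b) = box a ⊓ box b)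
    (hd1 : ∀ a b : A, dia (a ⊔ b) = dia a ⊔ dia b)
    (hax : ∀ a b : A, (dia a ⇨ box b) ≤ box (a ⇨ b))
    (U V : Set A) (hU : IsPrimeFilter U) (hV : IsPrimeFilter V)
    (hUV : ∀ a : A, box a ∈ U → a ∈ V) :
    ∃ W : Set A, IsPrimeFilter W ∧ U ⊆ W ∧
      (∀ a : A, box a ∈ W → a ∈ V) ∧ (∀ a : A, a ∈ V → dia a ∈ W) := by
  have hbox : Monotone box := Monotone.of_map_inf hb1
  have hdia : Monotone dia := Monotone.of_map_sup hd1
  obtain ⟨W, hW, hFW, hWI⟩ := exists_isPrimeFilter_of_disjoint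
    (F := (isPFilter_modalFilter hdia hU hV).toPFilter)
    (disjoint_modalFilter_modalIdeal hbox hax hU hV hUV)
  refine ⟨W, hW, (subset_modalFilter hV).trans hFW, fun a ha => ?_,
    fun a ha => hFW (dia_mem_modalFilter hU ha)⟩
  by_contra haV
  exact Set.disjoint_left.1 hWI ha ⟨a, haV, le_rfl⟩

theorem stmt18 {A : Type*} [HeytingAlgebra A]
    (box dia : A → A)
    (hb1 : ∀ a b : A, box (a ⊓ b) = box a ⊓ box b) (hb2 : box ⊤ = ⊤)
    (hd1 : ∀ a b : A, dia (a ⊔ b) = dia a ⊔ dia b) (hd2 : dia ⊥ = ⊥)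
    (hax : ∀ a b : A, (dia a ⇨ box b) ≤ box (a ⇨ b))
    (U V : Set A) (hU : IsPrimeFilter U) (hV : IsPrimeFilter V)
    (hUV : ∀ a : A, box a ∈ U → a ∈ V) :
    ∃ W : Set A, IsPrimeFilter W ∧ U ⊆ W ∧
      (∀ a : A, box a ∈ W → a ∈ V) ∧ (∀ a : A, a ∈ V → dia a ∈ W) :=
  stmt18_general box dia hb1 hd1 hax U V hU hV hUV
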